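/- arXiv:1707.05681 — 11 statements merged into one kernel-verified Lean document; each statement's English description precedes it below -/
import Mathlib

section
/- Let α be a type, T : Set α → Set α a monotone operator, and γ : Set α → Set α a pruning, idempotent constraint that is PreM to T and PreM to union. If for some natural number n the iteration of T from the empty set converges, i.e. T^(n+1)(∅) = T^n(∅), then γ applied to the union of all iterates of T from ∅ equals the n-th iterate of the γ-constrained operator from ∅: γ(⋃_{k∈ℕ} T^k(∅)) = (T_γ)^n(∅). -/
theorem prem_fixpoint_union
    {α : Type*} (T γ : Set α → Set α)
    (hT : Monotone T)
    (hprune : ∀ S : Set α, γ S ⊆ S)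
    (hidem : ∀ S : Set α, γ (γ S) = γ S)
    (hprem : ∀ I : Set α, γ (T I) = γ (T (γ I)))
    (hunion : ∀ S : ℕ → Set α, γ (⋃ j, S j) = γ (⋃ j, γ (S j)))
    (n : ℕ) (hconv : T^[n + 1] ∅ = T^[n] ∅) :
    γ (⋃ k, T^[k] ∅) = (fun I => γ (T I))^[n] ∅ := by
  have hstep : ∀ k : ℕ, T^[k] ∅ ⊆ T^[k + 1] ∅ := by
    intro k
    induction k with
    | zero => simp
    | succ k ih =>
      rw [Function.iterate_succ_apply', Function.iterate_succ_apply']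
      exact hT ih
  have hmono : ∀ {j k : ℕ}, j ≤ k → T^[j] ∅ ⊆ T^[k] ∅ :=
    fun {j k} h => monotone_nat_of_le_succ (fun m => hstep m) h
  have hstab : ∀ k : ℕ, T^[n + k] ∅ = T^[n] ∅ := by
    intro k
    induction k with
    | zero => rfl
    | succ k ih =>
      have : T^[n + (k + 1)] ∅ = T (T^[n + k] ∅) := by
        rw [← Nat.add_assoc, Function.iterate_succ_apply']
      rw [this, ih]
      exact (Function.iterate_succ_apply' T n ∅).symm.trans hconv
  have hunion_eq : (⋃ k, T^[k] ∅) = T^[n] ∅ := by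
    apply Set.Subset.antisymm
    · apply Set.iUnion_subset
      intro k
      rcases le_total k n with h | h
      · exact hmono h
      · obtain ⟨m, rfl⟩ := Nat.exists_eq_add_of_le h
        exact (hstab m).le
    · exact Set.subset_iUnion (fun k => T^[k] ∅) n
  have hiter : ∀ k : ℕ, γ (T^[k] ∅) = (fun I => γ (T I))^[k] ∅ := by
    intro k
    induction k with
    | zero =>
      simpa using Set.subset_empty_iff.mp (hprune ∅)
    | succ k ih =>
      rw [Function.iterate_succ_apply', Function.iterate_succ_apply',
        hprem, ih]
  rw [hunion_eq, hiter n]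
end

section
/- Let α be a type, T : Set α → Set α a monotone operator, and γ : Set α → Set α a pruning, idempotent constraint that is PreM to T and PreM to union. If for some natural number n the iteration of the γ-constrained operator T_γ from the empty set converges to I, i.e. (T_γ)^n(∅) = (T_γ)^(n+1)(∅) = I, then I is a minimal fixpoint of T_γ: T_γ(I) = I, and every I' ⊆ I with T_γ(I') = I' satisfies I' = I. -/
theorem prem_minimal_fixpoint
    {α : Type*} (T γ : Set α → Set α)
    (hT : Monotone T)
    (hprune : ∀ S : Set α, γ S ⊆ S)
    (hidem : ∀ S : Set α, γ (γ S) = γ S)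
    (hprem : ∀ J : Set α, γ (T J) = γ (T (γ J)))
    (hunion : ∀ S : ℕ → Set α, γ (⋃ j, S j) = γ (⋃ j, γ (S j)))
    (n : ℕ) (I : Set α)
    (h1 : (fun J => γ (T J))^[n] ∅ = I)
    (h2 : (fun J => γ (T J))^[n + 1] ∅ = I) :
    γ (T I) = I ∧ ∀ I' : Set α, I' ⊆ I → γ (T I') = I' → I' = I := by
  have hfix : γ (T I) = I := by
    rw [Function.iterate_succ_apply'] at h2
    rw [h1] at h2
    exact h2
  have hγI : γ I = I := by
    conv_lhs => rw [← hfix, hidem, hfix]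
  -- step 1 : constrained iteration = γ of unconstrained iteration
  have step1 : ∀ k : ℕ, (fun J => γ (T J))^[k] (∅ : Set α) = γ (T^[k] ∅) := by
    intro k
    induction k with
    | zero =>
        simp only [Function.iterate_zero, id_eq]
        exact (Set.subset_empty_iff.mp (hprune ∅)).symm
    | succ k ih =>
        rw [Function.iterate_succ_apply', Function.iterate_succ_apply', ih,
          ← hprem]
  refine ⟨hfix, ?_⟩
  intro I' hsub hfix'
  have hγI' : γ I' = I' := by
    conv_lhs => rw [← hfix', hidem, hfix']
  have lemE : ∀ k : ℕ, γ (T^[k] I') = I' := by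
    intro k
    induction k with
    | zero => simpa using hγI'
    | succ k ih =>
        rw [Function.iterate_succ_apply', hprem, ih, hfix']
  have hIeq : I = γ (T^[n] ∅) := by rw [← h1, step1]
  have hmono : T^[n] (∅ : Set α) ⊆ T^[n] I' := hT.iterate n (Set.empty_subset I')
  set S : ℕ → Set α := fun j => if j = 0 then T^[n] ∅ else T^[n] I' with hS
  have hU1 : (⋃ j, S j) = T^[n] I' := by
    apply Set.Subset.antisymm
    · apply Set.iUnion_subset
      intro j
      by_cases hj : j = 0 <;> simp [hS, hj, hmono]
    · intro x hx
      exact Set.mem_iUnion.mpr ⟨1, by simpa [hS] using hx⟩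
  have hU2 : (⋃ j, γ (S j)) = I := by
    apply Set.Subset.antisymm
    · apply Set.iUnion_subset
      intro j
      by_cases hj : j = 0
      · simp [hS, hj, ← hIeq]
      · simp only [hS, hj, if_neg hj]
        rw [lemE n]
        exact hsub
    · intro x hx
      refine Set.mem_iUnion.mpr ⟨0, ?_⟩
      simpa [hS, ← hIeq] using hx
  have := hunion S
  rw [hU1, hU2, lemE n, hγI] at this
  exact this
end

section
/- Let α be a type, T : Set α → Set α an operator, and γ : Set α → Set α a constraint that is PreM to T and satisfies γ(∅) = ∅. Then for every natural number k, γ applied to the k-th iterate of T from the empty set equals the k-th iterate of the γ-constrained operator from the empty set: γ(T^k(∅)) = (T_γ)^k(∅). -/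
theorem prem_iterates_eq
    {α : Type*} (T γ : Set α → Set α)
    (hprem : ∀ J : Set α, γ (T J) = γ (T (γ J)))
    (hempty : γ ∅ = ∅) :
    ∀ k : ℕ, γ (T^[k] ∅) = (fun J => γ (T J))^[k] ∅ := by
  intro k
  induction k with
  | zero => simpa using hempty
  | succ n ih =>
    rw [Function.iterate_succ_apply', Function.iterate_succ_apply',
      hprem, ih]
end

section
/- Let α be a type, T : Set α → Set α an operator, and γ : Set α → Set α a constraint that is PreM to T and satisfies γ(∅) = ∅. If the iteration of T from the empty set converges at step n, i.e. T^(n+1)(∅) = T^n(∅), then the iteration of the γ-constrained operator from the empty set also converges at step n: (T_γ)^(n+1)(∅) = (T_γ)^n(∅). -/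
theorem prem_convergence_transfer
    {α : Type*} (T γ : Set α → Set α)
    (hprem : ∀ J : Set α, γ (T J) = γ (T (γ J)))
    (hempty : γ ∅ = ∅)
    (n : ℕ) (hconv : T^[n + 1] ∅ = T^[n] ∅) :
    (fun J => γ (T J))^[n + 1] ∅ = (fun J => γ (T J))^[n] ∅ := by
  have key : ∀ k : ℕ, (fun J => γ (T J))^[k] ∅ = γ (T^[k] ∅) := by
    intro k
    induction k with
    | zero => simp [hempty]
    | succ k ih =>
      rw [Function.iterate_succ_apply', ih, Function.iterate_succ_apply']
      exact (hprem (T^[k] ∅)).symm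
  rw [key, key, hconv]
end

section
/- Let α be a type, T : Set α → Set α an operator, and γ : Set α → Set α an idempotent constraint that is PreM to T. If I' ⊆ α is a fixpoint of the γ-constrained operator, i.e. γ(T(I')) = I', then for every natural number k, the k-th iterate of T_γ starting from I' equals γ applied to the k-th iterate of T starting from I': (T_γ)^k(I') = γ(T^k(I')). -/
theorem prem_iterates_from_fixpoint
    {α : Type*} (T γ : Set α → Set α)
    (hidem : ∀ S : Set α, γ (γ S) = γ S)
    (hprem : ∀ J : Set α, γ (T J) = γ (T (γ J)))
    (I' : Set α) (hfix : γ (T I') = I') :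
    ∀ k : ℕ, (fun J => γ (T J))^[k] I' = γ (T^[k] I') := by
  intro k
  induction k with
  | zero =>
    simp only [Function.iterate_zero, id]
    calc I' = γ (T I') := hfix.symm
    _ = γ (γ (T I')) := (hidem _).symm
    _ = γ I' := by rw [hfix]
  | succ k ih =>
    rw [Function.iterate_succ_apply', Function.iterate_succ_apply', ih,
      ← hprem]
end

section
/- Let κ be a type of keys and let prod : List (κ × ℕ) → (κ × ℕ) → Prop be a deflation-preserving production relation, with immediate consequence operator T(I) = {h | ∃ l, every element of l belongs to I and prod l h}. Then the min constraint γ_min is PreM to T: for every I ⊆ κ × ℕ, γ_min(T(I)) = γ_min(T(γ_min(I))). -/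
/-- The immediate consequence operator of a production relation. -/
def ico {κ : Type*} (prod : List (κ × ℕ) → (κ × ℕ) → Prop) (I : Set (κ × ℕ)) :
    Set (κ × ℕ) :=
  {h | ∃ l : List (κ × ℕ), (∀ x ∈ l, x ∈ I) ∧ prod l h}

/-- `l'` deflates `l`: same length, componentwise same keys and costs of `l'` ≤ costs of `l`. -/
def Deflates {κ : Type*} (l' l : List (κ × ℕ)) : Prop :=
  List.Forall₂ (fun a b => a.1 = b.1 ∧ a.2 ≤ b.2) l' l

/-- `prod` is deflation-preserving. -/
def DeflationPreserving {κ : Type*} (prod : List (κ × ℕ) → (κ × ℕ) → Prop) : Prop :=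
  ∀ l h l', prod l h → Deflates l' l →
    ∃ h' : κ × ℕ, h'.1 = h.1 ∧ h'.2 ≤ h.2 ∧ prod l' h'

/-- The min constraint: keep only the tuples of minimal cost for each key. -/
def gammaMin {κ : Type*} (S : Set (κ × ℕ)) : Set (κ × ℕ) :=
  {p | p ∈ S ∧ ∀ q ∈ S, q.1 = p.1 → p.2 ≤ q.2}

/-! The deflation that replaces every body tuple by a minimal-cost tuple of the same key turns each
derivation from `I` into one from `γ_min(I)` whose head has the same key and no larger cost. Hence
`T(γ_min(I)) ⊆ T(I)` and every tuple of `T(I)` is undercut by one of `T(γ_min(I))`; two such sets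
have the same minimal tuples. -/

def Undercuts {κ : Type*} (A B : Set (κ × ℕ)) : Prop :=
  ∀ x ∈ B, ∃ y ∈ A, y.1 = x.1 ∧ y.2 ≤ x.2

section

variable {κ : Type*}

theorem gammaMin_subset (S : Set (κ × ℕ)) : gammaMin S ⊆ S :=
  fun _ hp => hp.1

theorem undercuts_gammaMin (S : Set (κ × ℕ)) : Undercuts (gammaMin S) S := by
  intro x hx
  have hne : ∃ c, (x.1, c) ∈ S := ⟨x.2, hx⟩
  refine ⟨(x.1, sInf {c | (x.1, c) ∈ S}), ⟨Nat.sInf_mem hne, ?_⟩, rfl, Nat.sInf_le hx⟩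
  rintro ⟨k, c⟩ hq rfl
  exact Nat.sInf_le hq

theorem gammaMin_eq_of_subset_of_undercuts {A B : Set (κ × ℕ)} (hAB : A ⊆ B)
    (hA : Undercuts A B) : gammaMin B = gammaMin A := by
  ext p
  constructor
  · rintro ⟨hpB, hmin⟩
    obtain ⟨p', hp'A, hkey, hcost⟩ := hA p hpB
    have hp' : p' = p := Prod.ext hkey (hcost.antisymm (hmin p' (hAB hp'A) hkey))
    subst hp'
    exact ⟨hp'A, fun q hq hqk => hmin q (hAB hq) hqk⟩
  · rintro ⟨hpA, hmin⟩
    refine ⟨hAB hpA, fun q hqB hqk => ?_⟩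
    obtain ⟨q', hq'A, hkey, hcost⟩ := hA q hqB
    exact (hmin q' hq'A (hkey.trans hqk)).trans hcost

theorem exists_deflates_of_undercuts {A B : Set (κ × ℕ)} (hA : Undercuts A B) :
    ∀ l : List (κ × ℕ), (∀ x ∈ l, x ∈ B) → ∃ l', Deflates l' l ∧ ∀ y ∈ l', y ∈ A
  | [], _ => ⟨[], List.Forall₂.nil, by simp⟩
  | a :: t, hl => by
    obtain ⟨b, hbA, hkey, hcost⟩ := hA a (hl a List.mem_cons_self)
    obtain ⟨t', ht', ht'A⟩ :=
      exists_deflates_of_undercuts hA t fun x hx => hl x (List.mem_cons_of_mem a hx)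
    refine ⟨b :: t', List.Forall₂.cons ⟨hkey, hcost⟩ ht', ?_⟩
    rintro y (_ | ⟨_, hy⟩)
    exacts [hbA, ht'A y hy]

variable (prod : List (κ × ℕ) → (κ × ℕ) → Prop)

theorem ico_mono {I J : Set (κ × ℕ)} (hIJ : I ⊆ J) : ico prod I ⊆ ico prod J := by
  rintro h ⟨l, hl, hprod⟩
  exact ⟨l, fun x hx => hIJ (hl x hx), hprod⟩

variable {prod}

theorem DeflationPreserving.undercuts_ico (hdp : DeflationPreserving prod)
    {A B : Set (κ × ℕ)} (hA : Undercuts A B) : Undercuts (ico prod A) (ico prod B) := by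
  rintro h ⟨l, hl, hprod⟩
  obtain ⟨l', hdefl, hl'A⟩ := exists_deflates_of_undercuts hA l hl
  obtain ⟨h', hkey, hcost, hprod'⟩ := hdp l h l' hprod hdefl
  exact ⟨h', ⟨l', hl'A, hprod'⟩, hkey, hcost⟩

end

theorem min_prem_of_deflation_preserving
    {κ : Type*} (prod : List (κ × ℕ) → (κ × ℕ) → Prop)
    (hdp : DeflationPreserving prod) :
    ∀ I : Set (κ × ℕ),
      gammaMin (ico prod I) = gammaMin (ico prod (gammaMin I)) := fun I =>
  gammaMin_eq_of_subset_of_undercuts (ico_mono prod (gammaMin_subset I))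
    (hdp.undercuts_ico (undercuts_gammaMin I))
end

section
/- Let κ be a type of keys and let prod : List (κ × ℕ) → (κ × ℕ) → Prop be an inflation-preserving production relation, with immediate consequence operator T(I) = {h | ∃ l, every element of l belongs to I and prod l h}. Then for every finite set I ⊆ κ × ℕ, the max constraint satisfies γ_max(T(I)) = γ_max(T(γ_max(I))). -/
/-- `l'` inflates `l`: same length, componentwise same keys and costs of `l'` ≥ costs of `l`. -/
def Inflates {κ : Type*} (l' l : List (κ × ℕ)) : Prop :=
  List.Forall₂ (fun a b => a.1 = b.1 ∧ a.2 ≥ b.2) l' l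

/-- `prod` is inflation-preserving. -/
def InflationPreserving {κ : Type*} (prod : List (κ × ℕ) → (κ × ℕ) → Prop) : Prop :=
  ∀ l h l', prod l h → Inflates l' l →
    ∃ h' : κ × ℕ, h'.1 = h.1 ∧ h'.2 ≥ h.2 ∧ prod l' h'

/-- The max constraint: keep only the tuples of maximal cost for each key. -/
def gammaMax {κ : Type*} (S : Set (κ × ℕ)) : Set (κ × ℕ) :=
  {p | p ∈ S ∧ ∀ q ∈ S, q.1 = p.1 → p.2 ≥ q.2}

section

variable {κ : Type*}

/-- `Inflates l' l` unfolds to `List.Forall₂ Dominates l' l`. -/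
def Dominates (q p : κ × ℕ) : Prop :=
  q.1 = p.1 ∧ q.2 ≥ p.2

theorem List.exists_forall₂_of_forall_exists {α β : Type*} {R : α → β → Prop} {A : Set α}
    {l : List β} (h : ∀ x ∈ l, ∃ y ∈ A, R y x) :
    ∃ l' : List α, (∀ y ∈ l', y ∈ A) ∧ List.Forall₂ R l' l := by
  induction l with
  | nil => exact ⟨[], by simp, .nil⟩
  | cons x l ih =>
    obtain ⟨y, hyA, hyx⟩ := h x List.mem_cons_self
    obtain ⟨l', hl'A, hl'l⟩ := ih fun z hz => h z (List.mem_cons_of_mem x hz)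
    exact ⟨y :: l', by simpa using ⟨hyA, hl'A⟩, .cons hyx hl'l⟩

theorem gammaMax_subset (S : Set (κ × ℕ)) : gammaMax S ⊆ S :=
  fun _ hp => hp.1

theorem Set.Finite.exists_mem_gammaMax_dominates {S : Set (κ × ℕ)} (hS : S.Finite)
    {p : κ × ℕ} (hp : p ∈ S) : ∃ q ∈ gammaMax S, Dominates q p := by
  obtain ⟨q, ⟨hqS, hqp⟩, hq_max⟩ := Set.exists_max_image {r ∈ S | r.1 = p.1} Prod.snd
    (hS.subset (Set.sep_subset _ _)) ⟨p, hp, rfl⟩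
  exact ⟨q, ⟨hqS, fun r hrS hrq => hq_max r ⟨hrS, hrq.trans hqp⟩⟩, hqp, hq_max p ⟨hp, rfl⟩⟩

theorem ico_mono_s9 (prod : List (κ × ℕ) → (κ × ℕ) → Prop) {A B : Set (κ × ℕ)} (hAB : A ⊆ B) :
    ico prod A ⊆ ico prod B := by
  rintro h ⟨l, hl, hlh⟩
  exact ⟨l, fun x hx => hAB (hl x hx), hlh⟩

theorem InflationPreserving.exists_mem_ico_gammaMax_dominates
    {prod : List (κ × ℕ) → (κ × ℕ) → Prop} (hip : InflationPreserving prod)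
    {S : Set (κ × ℕ)} (hS : S.Finite) {h : κ × ℕ} (hh : h ∈ ico prod S) :
    ∃ h' ∈ ico prod (gammaMax S), Dominates h' h := by
  obtain ⟨l, hlS, hlh⟩ := hh
  obtain ⟨l', hl'S, hl'l⟩ := List.exists_forall₂_of_forall_exists
    fun x hx => hS.exists_mem_gammaMax_dominates (hlS x hx)
  obtain ⟨h', hkey, hcost, hl'h'⟩ := hip l h l' hlh hl'l
  exact ⟨h', ⟨l', hl'S, hl'h'⟩, hkey, hcost⟩

theorem gammaMax_eq_of_subset_of_dominated {A B : Set (κ × ℕ)} (hAB : A ⊆ B)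
    (hdom : ∀ p ∈ B, ∃ q ∈ A, Dominates q p) : gammaMax B = gammaMax A := by
  ext p
  constructor
  · rintro ⟨hpB, hp_max⟩
    obtain ⟨q, hqA, hkey, hcost⟩ := hdom p hpB
    have hqp : q = p := Prod.ext hkey (le_antisymm (hp_max q (hAB hqA) hkey) hcost)
    subst hqp
    exact ⟨hqA, fun r hrA => hp_max r (hAB hrA)⟩
  · rintro ⟨hpA, hp_max⟩
    refine ⟨hAB hpA, fun r hrB hrp => ?_⟩
    obtain ⟨q, hqA, hkey, hcost⟩ := hdom r hrB
    exact hcost.trans (hp_max q hqA (hkey.trans hrp))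

end

theorem max_prem_of_inflation_preserving
    {κ : Type*} (prod : List (κ × ℕ) → (κ × ℕ) → Prop)
    (hip : InflationPreserving prod) :
    ∀ I : Set (κ × ℕ), I.Finite →
      gammaMax (ico prod I) = gammaMax (ico prod (gammaMax I)) := fun _ hI =>
  gammaMax_eq_of_subset_of_dominated (ico_mono_s9 prod (gammaMax_subset _))
    fun _ hh => hip.exists_mem_ico_gammaMax_dominates hI hh
end

section
/- Let κ be a type of keys and let prod : List (κ × ℕ) → (κ × ℕ) → Prop be an ascending production relation, with immediate consequence operator T(I) = {h | ∃ l, every element of l belongs to I and prod l h}. Then for any bound c₀, the upper-bound constraint γ_{<c₀} is PreM to T: for every I ⊆ κ × ℕ, γ_{<c₀}(T(I)) = γ_{<c₀}(T(γ_{<c₀}(I))). -/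
/-- `prod` is ascending: every body cost is ≤ the head cost. -/
def Ascending {κ : Type*} (prod : List (κ × ℕ) → (κ × ℕ) → Prop) : Prop :=
  ∀ l h, prod l h → ∀ x ∈ l, x.2 ≤ h.2

/-- The upper-bound constraint: keep only tuples with cost < c₀. -/
def gammaLt {κ : Type*} (c₀ : ℕ) (S : Set (κ × ℕ)) : Set (κ × ℕ) :=
  {p | p ∈ S ∧ p.2 < c₀}

theorem upper_bound_prem_of_ascending
    {κ : Type*} (prod : List (κ × ℕ) → (κ × ℕ) → Prop)
    (hasc : Ascending prod) (c₀ : ℕ) :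
    ∀ I : Set (κ × ℕ),
      gammaLt c₀ (ico prod I) = gammaLt c₀ (ico prod (gammaLt c₀ I)) := by
  intro I
  ext p
  constructor
  · rintro ⟨⟨l, hl, hp⟩, hc⟩
    exact ⟨⟨l, fun x hx => ⟨hl x hx, lt_of_le_of_lt (hasc l p hp x hx) hc⟩, hp⟩, hc⟩
  · rintro ⟨⟨l, hl, hp⟩, hc⟩
    exact ⟨⟨l, fun x hx => (hl x hx).1, hp⟩, hc⟩
end

section
/- Let κ be a type of keys and let prod : List (κ × ℕ) → (κ × ℕ) → Prop be a descending production relation, with immediate consequence operator T(I) = {h | ∃ l, every element of l belongs to I and prod l h}. Then for any bound c₀, the lower-bound constraint γ_{>c₀} is PreM to T: for every I ⊆ κ × ℕ, γ_{>c₀}(T(I)) = γ_{>c₀}(T(γ_{>c₀}(I))). -/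
/-- `prod` is descending: every body cost is ≥ the head cost. -/
def Descending {κ : Type*} (prod : List (κ × ℕ) → (κ × ℕ) → Prop) : Prop :=
  ∀ l h, prod l h → ∀ x ∈ l, x.2 ≥ h.2

/-- The lower-bound constraint: keep only tuples with cost > c₀. -/
def gammaGt {κ : Type*} (c₀ : ℕ) (S : Set (κ × ℕ)) : Set (κ × ℕ) :=
  {p | p ∈ S ∧ p.2 > c₀}

theorem lower_bound_prem_of_descending
    {κ : Type*} (prod : List (κ × ℕ) → (κ × ℕ) → Prop)
    (hdesc : Descending prod) (c₀ : ℕ) :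
    ∀ I : Set (κ × ℕ),
      gammaGt c₀ (ico prod I) = gammaGt c₀ (ico prod (gammaGt c₀ I)) := by
  intro I
  ext p
  constructor
  · rintro ⟨⟨l, hl, hprod⟩, hc⟩
    exact ⟨⟨l, fun x hx => ⟨hl x hx, lt_of_lt_of_le hc (hdesc l p hprod x hx)⟩, hprod⟩, hc⟩
  · rintro ⟨⟨l, hl, hprod⟩, hc⟩
    exact ⟨⟨l, fun x hx => (hl x hx).1, hprod⟩, hc⟩
end

section
/- Let κ be a type of keys. For any family (S_j)_{j∈J} of subsets of κ × ℕ, the min constraint is PreM to union: γ_min(⋃_{j∈J} S_j) = γ_min(⋃_{j∈J} γ_min(S_j)). -/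
theorem min_prem_to_union
    {κ : Type*} {J : Type*} (S : J → Set (κ × ℕ)) :
    gammaMin (⋃ j, S j) = gammaMin (⋃ j, gammaMin (S j)) := by
  -- helper: for any q in S i, there is a minimal element with same key in gammaMin (S i)
  have key : ∀ (i : J) (q : κ × ℕ), q ∈ S i →
      ∃ c, (q.1, c) ∈ gammaMin (S i) ∧ c ≤ q.2 := by
    intro i q hq
    set T : Set ℕ := {c | (q.1, c) ∈ S i} with hT
    have hne : T.Nonempty := ⟨q.2, hq⟩
    refine ⟨sInf T, ⟨Nat.sInf_mem hne, ?_⟩, Nat.sInf_le hq⟩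
    intro r hr hrk
    exact Nat.sInf_le (show r.2 ∈ T by simpa [hT, hrk] using (show (r.1, r.2) ∈ S i by simpa using hr))
  ext p
  constructor
  · rintro ⟨hp, hmin⟩
    obtain ⟨i, hi⟩ := Set.mem_iUnion.mp hp
    have hpi : p ∈ gammaMin (S i) := by
      refine ⟨hi, fun q hq hk => hmin q (Set.mem_iUnion.mpr ⟨i, hq⟩) hk⟩
    refine ⟨Set.mem_iUnion.mpr ⟨i, hpi⟩, ?_⟩
    rintro q hq hk
    obtain ⟨j, hqj⟩ := Set.mem_iUnion.mp hq
    exact hmin q (Set.mem_iUnion.mpr ⟨j, hqj.1⟩) hk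
  · rintro ⟨hp, hmin⟩
    obtain ⟨i, hpi⟩ := Set.mem_iUnion.mp hp
    refine ⟨Set.mem_iUnion.mpr ⟨i, hpi.1⟩, ?_⟩
    intro q hq hk
    obtain ⟨j, hqj⟩ := Set.mem_iUnion.mp hq
    obtain ⟨c, hc, hcle⟩ := key j q hqj
    have : p.2 ≤ c := hmin (q.1, c) (Set.mem_iUnion.mpr ⟨j, hc⟩) hk
    exact this.trans hcle
end

section
/- Let κ be a type of keys and let prod : List (κ × ℕ) → (κ × ℕ) → Prop be a production relation that is both ascending and deflation-preserving, with immediate consequence operator T(I) = {h | ∃ l, every element of l belongs to I and prod l h}. Then for any bound c₀, the conjunct constraint γ := γ_min ∘ γ_{<c₀} (apply the upper-bound constraint first, then the min constraint) is PreM to T: for every I ⊆ κ × ℕ, γ(T(I)) = γ(T(γ(I))). -/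
theorem aux_mem {κ : Type*} {prod : List (κ × ℕ) → (κ × ℕ) → Prop}
    (hasc : Ascending prod) (hdp : DeflationPreserving prod) (c₀ : ℕ)
    (I : Set (κ × ℕ)) {h : κ × ℕ} (hh : h ∈ ico prod I) (hc : h.2 < c₀) :
    ∃ h' : κ × ℕ, h'.1 = h.1 ∧ h'.2 ≤ h.2 ∧ h' ∈ ico prod (gammaMin (gammaLt c₀ I)) := by
  obtain ⟨l, hl, hp⟩ := hh
  set m : κ × ℕ → κ × ℕ := fun x => (x.1, sInf {c | (x.1, c) ∈ I ∧ c < c₀}) with hm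
  have hdef : Deflates (l.map m) l := by
    rw [Deflates, List.forall₂_map_left_iff]
    refine List.forall₂_same.2 fun x hx => ⟨rfl, ?_⟩
    exact Nat.sInf_le ⟨hl x hx, lt_of_le_of_lt (hasc l h hp x hx) hc⟩
  obtain ⟨h', h1, h2, h3⟩ := hdp l h (l.map m) hp hdef
  refine ⟨h', h1, h2, l.map m, ?_, h3⟩
  intro y hy
  obtain ⟨x, hx, rfl⟩ := List.mem_map.1 hy
  have hne : ({c | (x.1, c) ∈ I ∧ c < c₀} : Set ℕ).Nonempty :=
    ⟨x.2, hl x hx, lt_of_le_of_lt (hasc l h hp x hx) hc⟩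
  have hmem := Nat.sInf_mem hne
  refine ⟨⟨hmem.1, hmem.2⟩, fun q hq hq1 => Nat.sInf_le ⟨?_, hq.2⟩⟩
  rw [← hq1]; exact hq.1

theorem min_and_upper_bound_prem
    {κ : Type*} (prod : List (κ × ℕ) → (κ × ℕ) → Prop)
    (hasc : Ascending prod) (hdp : DeflationPreserving prod) (c₀ : ℕ) :
    ∀ I : Set (κ × ℕ),
      (gammaMin ∘ gammaLt c₀) (ico prod I)
        = (gammaMin ∘ gammaLt c₀) (ico prod ((gammaMin ∘ gammaLt c₀) I)) := by
  intro I
  have hsub : ico prod (gammaMin (gammaLt c₀ I)) ⊆ ico prod I := by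
    rintro p ⟨l, hl, hp⟩
    exact ⟨l, fun x hx => (hl x hx).1.1, hp⟩
  ext p
  simp only [Function.comp, gammaMin, gammaLt, Set.mem_setOf_eq]
  constructor
  · rintro ⟨⟨hpT, hpc⟩, hmin⟩
    obtain ⟨h', h1, h2, h3⟩ := aux_mem hasc hdp c₀ I hpT hpc
    have h2' : p.2 ≤ h'.2 := hmin h' ⟨hsub h3, lt_of_le_of_lt h2 hpc⟩ h1
    have hpe : h' = p := Prod.ext h1 (le_antisymm h2 h2')
    refine ⟨⟨hpe ▸ h3, hpc⟩, fun q hq hq1 => ?_⟩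
    obtain ⟨qT, qc⟩ := hq
    exact hmin q ⟨hsub qT, qc⟩ hq1
  · rintro ⟨⟨hpT, hpc⟩, hmin⟩
    refine ⟨⟨hsub hpT, hpc⟩, fun q hq hq1 => ?_⟩
    obtain ⟨q', q1, q2, q3⟩ := aux_mem hasc hdp c₀ I hq.1 hq.2
    calc p.2 ≤ q'.2 := hmin q' ⟨q3, lt_of_le_of_lt q2 hq.2⟩ (q1.trans hq1)
      _ ≤ q.2 := q2
end
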